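/- For every ω in the piecewise polynomial space V_h^k (with periodic trace identification) and every integer p ≥ 2, the conservative-flux nonlinear form vanishes on the diagonal: N^c(ω,ω) = 0. -/

import Mathlib

open Polynomial Set

noncomputable section

namespace FW

variable {N : ℕ}

/-- Minus trace `ω⁻` at interface `j+1/2` (right end of cell `j`). -/
def trM (x : Fin (N + 1) → ℝ) (ω : Fin N → Polynomial ℝ) (j : Fin N) : ℝ :=
  (ω j).eval (x j.succ)

/-- Plus trace `ω⁺` at interface `j+1/2` (left end of the next cell, cyclically). -/
def trP [NeZero N] (x : Fin (N + 1) → ℝ) (ω : Fin N → Polynomial ℝ) (j : Fin N) : ℝ :=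
  (ω (j + 1)).eval (x (j + 1).castSucc)

/-- Average trace `{ω}`. -/
def trA [NeZero N] (x : Fin (N + 1) → ℝ) (ω : Fin N → Polynomial ℝ) (j : Fin N) : ℝ :=
  (trP x ω j + trM x ω j) / 2

/-- Jump `[ω]`. -/
def jmp [NeZero N] (x : Fin (N + 1) → ℝ) (ω : Fin N → Polynomial ℝ) (j : Fin N) : ℝ :=
  trP x ω j - trM x ω j

/-- Cell L² pairing `(u, φ)_{I_j}` of a piecewise polynomial with a test polynomial. -/
def ipj (x : Fin (N + 1) → ℝ) (u : Fin N → Polynomial ℝ) (j : Fin N) (φ : Polynomial ℝ) : ℝ :=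
  ∫ t in (x j.castSucc)..(x j.succ), (u j).eval t * φ.eval t

/-- Cell pairing `(f∘u, φ)_{I_j}`. -/
def ipfj (x : Fin (N + 1) → ℝ) (f : ℝ → ℝ) (u : Fin N → Polynomial ℝ) (j : Fin N)
    (φ : Polynomial ℝ) : ℝ :=
  ∫ t in (x j.castSucc)..(x j.succ), f ((u j).eval t) * φ.eval t

/-- Boundary pairing `⟨g, φ⟩_{I_j}` for interface values `g`. -/
def bdj [NeZero N] (x : Fin (N + 1) → ℝ) (g : Fin N → ℝ) (j : Fin N) (φ : Polynomial ℝ) : ℝ :=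
  g j * φ.eval (x j.succ) - g (j - 1) * φ.eval (x j.castSucc)

/-- Membership in the space `V_h^k` of piecewise polynomials of degree at most `k`. -/
def memV (k : ℕ) (ω : Fin N → Polynomial ℝ) : Prop :=
  ∀ j, (ω j).degree ≤ (k : WithBot ℕ)

/-- `L⁻(ω, φ)`. -/
def Lm [NeZero N] (x : Fin (N + 1) → ℝ) (ω φ : Fin N → Polynomial ℝ) : ℝ :=
  ∑ j, (-(ipj x ω j (derivative (φ j))) + bdj x (trM x ω) j (φ j))

/-- `L⁺(ω, φ)`. -/
def Lp [NeZero N] (x : Fin (N + 1) → ℝ) (ω φ : Fin N → Polynomial ℝ) : ℝ :=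
  ∑ j, (-(ipj x ω j (derivative (φ j))) + bdj x (trP x ω) j (φ j))

/-- `L^c(ω, φ)`. -/
def Lc [NeZero N] (x : Fin (N + 1) → ℝ) (ω φ : Fin N → Polynomial ℝ) : ℝ :=
  ∑ j, (-(ipj x ω j (derivative (φ j))) + bdj x (trA x ω) j (φ j))

/-- Godunov numerical flux. -/
def godunov (f : ℝ → ℝ) (c d : ℝ) : ℝ :=
  if c < d then sInf (f '' Set.Icc c d) else sSup (f '' Set.Icc d c)

/-- Conservative numerical flux for `f(u) = u^p/p`, `F(u) = u^(p+1)/(p(p+1))`. -/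
def consFlux (p : ℕ) (c d : ℝ) : ℝ :=
  if c = d then c ^ p / (p : ℝ)
  else (d ^ (p + 1) / ((p : ℝ) * ((p : ℝ) + 1)) - c ^ (p + 1) / ((p : ℝ) * ((p : ℝ) + 1))) / (d - c)

/-- Dissipative (Godunov-flux) nonlinear form `N^d`. -/
def Nd [NeZero N] (x : Fin (N + 1) → ℝ) (f : ℝ → ℝ) (ω φ : Fin N → Polynomial ℝ) : ℝ :=
  ∑ j, (-(ipfj x f ω j (derivative (φ j)))
    + bdj x (fun i => godunov f (trM x ω i) (trP x ω i)) j (φ j))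

/-- Conservative-flux nonlinear form `N^c`. -/
def Nc [NeZero N] (x : Fin (N + 1) → ℝ) (p : ℕ) (ω φ : Fin N → Polynomial ℝ) : ℝ :=
  ∑ j, (-(ipfj x (fun w => w ^ p / (p : ℝ)) ω j (derivative (φ j)))
    + bdj x (fun i => consFlux p (trM x ω i) (trP x ω i)) j (φ j))

end FW

/-!
On each cell `f(ω_j) ω_j' = (F ∘ ω_j)'`, so `(f(ω), ω')_{I_j} = F(ω⁻_{j+1/2}) − F(ω⁺_{j−1/2})` and cell `j`
contributes `D_{j+1/2}(ω⁻_{j+1/2}) − D_{j−1/2}(ω⁺_{j−1/2})`, where `D_i(u) = f̂_i u − F(u)`. After a periodic shift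
of the second sum, everything reduces to `D_i(ω⁻_i) = D_i(ω⁺_i)`, which is the defining property
`f̂(c, d) (d − c) = F(d) − F(c)` of the conservative flux.
-/

namespace FW

variable {N : ℕ}

/-- The paper's `F`. -/
def fluxPrimitive (p : ℕ) (u : ℝ) : ℝ :=
  u ^ (p + 1) / ((p : ℝ) * ((p : ℝ) + 1))

lemma consFlux_mul_sub (p : ℕ) (c d : ℝ) :
    consFlux p c d * (d - c) = fluxPrimitive p d - fluxPrimitive p c := by
  unfold consFlux fluxPrimitive
  split_ifs with h
  · simp [h]
  · field_simp [sub_ne_zero.mpr (Ne.symm h)]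

lemma hasDerivAt_fluxPrimitive {p : ℕ} (hp : (p : ℝ) ≠ 0) (u : ℝ) :
    HasDerivAt (fluxPrimitive p) (u ^ p / p) u := by
  refine ((hasDerivAt_pow (p + 1) u).div_const ((p : ℝ) * ((p : ℝ) + 1))).congr_deriv ?_
  push_cast
  field_simp

lemma integral_pow_div_mul_derivative {p : ℕ} (hp : (p : ℝ) ≠ 0) (q : ℝ[X]) (l r : ℝ) :
    ∫ t in l..r, q.eval t ^ p / p * (derivative q).eval t
      = fluxPrimitive p (q.eval r) - fluxPrimitive p (q.eval l) := by
  refine intervalIntegral.integral_eq_sub_of_hasDerivAt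
    (fun t _ => (hasDerivAt_fluxPrimitive hp _).comp t (q.hasDerivAt t)) ?_
  exact (by fun_prop : Continuous fun t => q.eval t ^ p / p * (derivative q).eval t)
    |>.intervalIntegrable l r

lemma trP_sub_one [NeZero N] (x : Fin (N + 1) → ℝ) (ω : Fin N → ℝ[X]) (j : Fin N) :
    trP x ω (j - 1) = (ω j).eval (x j.castSucc) := by
  rw [trP, sub_add_cancel]

def fluxDefect (p : ℕ) (c d u : ℝ) : ℝ :=
  consFlux p c d * u - fluxPrimitive p u

lemma fluxDefect_left_eq_right (p : ℕ) (c d : ℝ) :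
    fluxDefect p c d c = fluxDefect p c d d := by
  have := consFlux_mul_sub p c d
  unfold fluxDefect
  linarith

lemma Nc_self_eq_sum_fluxDefect [NeZero N] {p : ℕ} (hp : (p : ℝ) ≠ 0)
    (x : Fin (N + 1) → ℝ) (ω : Fin N → ℝ[X]) :
    Nc x p ω ω = ∑ j, (fluxDefect p (trM x ω j) (trP x ω j) (trM x ω j)
      - fluxDefect p (trM x ω (j - 1)) (trP x ω (j - 1)) (trP x ω (j - 1))) := by
  refine Finset.sum_congr rfl fun j _ => ?_
  rw [ipfj, integral_pow_div_mul_derivative hp, bdj, fluxDefect, fluxDefect, trP_sub_one, trM]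
  ring

end FW

theorem stmt6_general {N : ℕ} [NeZero N]
    (x : Fin (N + 1) → ℝ)
    (p : ℕ) (hp : 2 ≤ p)
    (ω : Fin N → Polynomial ℝ) :
    FW.Nc x p ω ω = 0 := by
  have hp0 : (p : ℝ) ≠ 0 := by exact_mod_cast (by omega : p ≠ 0)
  set D : Fin N → ℝ → ℝ := fun i => FW.fluxDefect p (FW.trM x ω i) (FW.trP x ω i)
  have hshift : ∑ j, D (j - 1) (FW.trP x ω (j - 1)) = ∑ j, D j (FW.trP x ω j) :=
    (Equiv.subRight (1 : Fin N)).sum_comp fun j => D j (FW.trP x ω j)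
  rw [FW.Nc_self_eq_sum_fluxDefect hp0, Finset.sum_sub_distrib, hshift, ← Finset.sum_sub_distrib]
  exact Finset.sum_eq_zero fun j _ => sub_eq_zero.mpr (FW.fluxDefect_left_eq_right p _ _)

theorem stmt6 {N : ℕ} [NeZero N] (hN : 1 ≤ N) (a b : ℝ) (hab : a < b)
    (x : Fin (N + 1) → ℝ) (hx : StrictMono x) (hxa : x 0 = a) (hxb : x (Fin.last N) = b)
    (k : ℕ) (p : ℕ) (hp : 2 ≤ p)
    (ω : Fin N → Polynomial ℝ) (hω : FW.memV k ω) :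
    FW.Nc x p ω ω = 0 :=
  stmt6_general x p hp ω
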